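/- arXiv:1809.00091 — 5 statements merged into one kernel-verified Lean document; each statement's English description precedes it below -/
import Mathlib

section
/- Let a₋₁ > 0, a₀ ≥ 0, a₁ ≥ 0, a₂ > 0, b ≥ 0, δ ≥ 0, λ ≥ 0, ρ > 1, γ > 1 and 0 < θ < 1. Then there exists a constant K₁ > 0 such that for all y > 0: LV(y) + λ·(V(y + δy) − V(y)) ≤ K₁, i.e. θ(y^{θ−1} − y^{−1})·(a₋₁y^{−1} − a₀ + a₁y − a₂y^{γ}) + (b²θ/2)·((θ−1)y^{θ+2ρ−2} + y^{2ρ−2}) + λ·(((1+δ)^θ − 1)·y^θ − θ·log(1+δ)) ≤ K₁. -/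
/-!
On `(0, ∞)` the expression is continuous and tends to `-∞` at both ends, hence is bounded above.
Near `∞` the drift term `-θ a₂ y ^ (θ + γ - 1)` dominates and the diffusion part is eventually
nonpositive because `θ < 1`; near `0` the term `-θ a₋₁ y ^ (-2)` dominates and the diffusion part
stays bounded because `ρ > 1`. In both regimes the drift and jump parts have the form
`z ^ (-p) * P z - C`, in the variable `z = y⁻¹` resp. `z = y`, with `P` continuous at `0` and
`P 0 < 0`.
-/

open Real Filter Topology Set

theorem ContinuousOn.exists_forall_le_of_tendsto_atBot_Ioi_zero {f : ℝ → ℝ}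
    (hf : ContinuousOn f (Ioi 0)) (h0 : Tendsto f (𝓝[>] 0) atBot)
    (htop : Tendsto f atTop atBot) : ∃ M, ∀ y, 0 < y → f y ≤ M := by
  have hcont : Continuous (f ∘ exp) := hf.comp_continuous continuous_exp exp_pos
  have hcocompact : Tendsto (f ∘ exp) (cocompact ℝ) atBot := by
    rw [cocompact_eq_atBot_atTop]
    exact tendsto_sup.2 ⟨h0.comp tendsto_exp_atBot_nhdsGT, htop.comp tendsto_exp_atTop⟩
  obtain ⟨x₀, hx₀⟩ := hcont.exists_forall_ge hcocompact
  exact ⟨f (exp x₀), fun y hy => by simpa [Real.exp_log hy] using hx₀ (Real.log y)⟩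

theorem tendsto_rpow_neg_mul_nhdsGT_zero_atBot {P : ℝ → ℝ} {p : ℝ} (hp : 0 < p)
    (hP : ContinuousAt P 0) (hP0 : P 0 < 0) :
    Tendsto (fun z => z ^ (-p) * P z) (𝓝[>] 0) atBot :=
  (tendsto_rpow_neg_nhdsGT_zero (neg_neg_of_pos hp)).atTop_mul_neg hP0
    (hP.tendsto.mono_left nhdsWithin_le_nhds)

namespace AitSahalia

-- `driftPart`, `diffusionPart` and `jumpPart` are `V' f`, `V'' g² / 2` and `λ (V (y + δ y) - V y)`,
-- so `generator` is `LV + λ (V (y + δ y) - V y)`.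

noncomputable def driftPart (am1 a₀ a₁ a₂ γ θ y : ℝ) : ℝ :=
  θ * (y ^ (θ - 1) - y⁻¹) * (am1 * y⁻¹ - a₀ + a₁ * y - a₂ * y ^ γ)

noncomputable def diffusionPart (b ρ θ y : ℝ) : ℝ :=
  b ^ 2 * θ / 2 * ((θ - 1) * y ^ (θ + 2 * ρ - 2) + y ^ (2 * ρ - 2))

noncomputable def jumpPart (δ lam θ y : ℝ) : ℝ :=
  lam * (((1 + δ) ^ θ - 1) * y ^ θ - θ * log (1 + δ))

noncomputable def generator (am1 a₀ a₁ a₂ b δ lam ρ γ θ y : ℝ) : ℝ :=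
  driftPart am1 a₀ a₁ a₂ γ θ y + diffusionPart b ρ θ y + jumpPart δ lam θ y

variable {am1 a₀ a₁ a₂ b δ lam ρ γ θ : ℝ}

theorem driftPart_add_jumpPart_inv_eq_rpow_neg_mul {z : ℝ} (hz : 0 < z) :
    driftPart am1 a₀ a₁ a₂ γ θ z⁻¹ + jumpPart δ lam θ z⁻¹ =
      z ^ (-(θ + γ - 1)) * (θ * (1 - z ^ θ) * (am1 * z ^ (γ + 1) - a₀ * z ^ γ
        + a₁ * z ^ (γ - 1) - a₂) + lam * ((1 + δ) ^ θ - 1) * z ^ (γ - 1))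
      - lam * θ * log (1 + δ) := by
  simp only [driftPart, jumpPart, inv_inv, inv_rpow hz.le, rpow_neg hz.le, rpow_sub hz,
    rpow_add hz, rpow_one]
  field_simp
  ring

theorem driftPart_add_jumpPart_eq_rpow_neg_two_mul {y : ℝ} (hy : 0 < y) :
    driftPart am1 a₀ a₁ a₂ γ θ y + jumpPart δ lam θ y =
      y ^ (-2 : ℝ) * (θ * (y ^ θ - 1) * (am1 - a₀ * y + a₁ * y ^ 2 - a₂ * y ^ (γ + 1))
        + lam * ((1 + δ) ^ θ - 1) * y ^ (θ + 2))
      - lam * θ * log (1 + δ) := by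
  simp only [driftPart, jumpPart, rpow_neg hy.le, rpow_sub hy, rpow_add hy, rpow_one, rpow_two]
  field_simp
  ring

theorem tendsto_driftPart_add_jumpPart_atTop (ha₂ : 0 < a₂) (hγ : 1 < γ) (hθ : 0 < θ) :
    Tendsto (fun y => driftPart am1 a₀ a₁ a₂ γ θ y + jumpPart δ lam θ y) atTop atBot := by
  have hP : ContinuousAt (fun z : ℝ => θ * (1 - z ^ θ) * (am1 * z ^ (γ + 1) - a₀ * z ^ γ
      + a₁ * z ^ (γ - 1) - a₂) + lam * ((1 + δ) ^ θ - 1) * z ^ (γ - 1)) 0 := by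
    fun_prop (disch := linarith)
  have hlim := tendsto_rpow_neg_mul_nhdsGT_zero_atBot (p := θ + γ - 1) (by linarith) hP
    (by simpa [zero_rpow, hθ.ne', (sub_pos.2 hγ).ne', (by linarith : 0 < γ + 1).ne',
      (by linarith : 0 < γ).ne'] using mul_pos hθ ha₂)
  refine ((tendsto_atBot_add_const_right _ (-(lam * θ * log (1 + δ))) hlim).comp
    tendsto_inv_atTop_nhdsGT_zero).congr' ?_
  filter_upwards [eventually_gt_atTop 0] with y hy
  rw [Function.comp_apply, ← sub_eq_add_neg,
    ← driftPart_add_jumpPart_inv_eq_rpow_neg_mul (inv_pos.2 hy), inv_inv]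

theorem tendsto_driftPart_add_jumpPart_nhdsGT_zero (ham1 : 0 < am1) (hγ : -1 < γ)
    (hθ : 0 < θ) :
    Tendsto (fun y => driftPart am1 a₀ a₁ a₂ γ θ y + jumpPart δ lam θ y) (𝓝[>] 0) atBot := by
  have hQ : ContinuousAt (fun y : ℝ => θ * (y ^ θ - 1) * (am1 - a₀ * y + a₁ * y ^ 2
      - a₂ * y ^ (γ + 1)) + lam * ((1 + δ) ^ θ - 1) * y ^ (θ + 2)) 0 := by
    fun_prop (disch := linarith)
  have hlim := tendsto_rpow_neg_mul_nhdsGT_zero_atBot (p := 2) two_pos hQ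
    (by simpa [zero_rpow, hθ.ne', (by linarith : 0 < γ + 1).ne', (by linarith : 0 < θ + 2).ne']
      using mul_pos hθ ham1)
  refine (tendsto_atBot_add_const_right _ (-(lam * θ * log (1 + δ))) hlim).congr' ?_
  filter_upwards [self_mem_nhdsWithin] with y hy
  rw [← sub_eq_add_neg, ← driftPart_add_jumpPart_eq_rpow_neg_two_mul hy]

theorem diffusionPart_eventually_nonpos (hθ0 : 0 < θ) (hθ1 : θ < 1) :
    ∀ᶠ y in atTop, diffusionPart b ρ θ y ≤ 0 := by
  filter_upwards [eventually_gt_atTop 0,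
    (tendsto_rpow_atTop hθ0).eventually_ge_atTop (1 - θ)⁻¹] with y hy hyθ
  have hsplit :
      diffusionPart b ρ θ y = b ^ 2 * θ / 2 * y ^ (2 * ρ - 2) * ((θ - 1) * y ^ θ + 1) := by
    rw [diffusionPart, show θ + 2 * ρ - 2 = θ + (2 * ρ - 2) by ring, rpow_add hy]
    ring
  have hdom : 1 ≤ (1 - θ) * y ^ θ := (inv_le_iff_one_le_mul₀' (sub_pos.2 hθ1)).1 hyθ
  rw [hsplit]
  exact mul_nonpos_of_nonneg_of_nonpos (by positivity) (by linarith)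

theorem diffusionPart_eventually_le_nhdsGT_zero (hρ : 1 ≤ ρ) (hθ0 : 0 ≤ θ) (hθ1 : θ ≤ 1) :
    ∀ᶠ y in 𝓝[>] 0, diffusionPart b ρ θ y ≤ b ^ 2 * θ / 2 := by
  filter_upwards [Ioc_mem_nhdsGT (zero_lt_one' ℝ)] with y ⟨hy0, hy1⟩
  have hneg : (θ - 1) * y ^ (θ + 2 * ρ - 2) ≤ 0 :=
    mul_nonpos_of_nonpos_of_nonneg (by linarith) (rpow_nonneg hy0.le _)
  have hle : y ^ (2 * ρ - 2) ≤ 1 := rpow_le_one hy0.le hy1 (by linarith)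
  calc diffusionPart b ρ θ y ≤ b ^ 2 * θ / 2 * 1 := by
        rw [diffusionPart]; gcongr; linarith
    _ = b ^ 2 * θ / 2 := mul_one _

theorem tendsto_generator_atTop (ha₂ : 0 < a₂) (hγ : 1 < γ) (hθ0 : 0 < θ) (hθ1 : θ < 1) :
    Tendsto (generator am1 a₀ a₁ a₂ b δ lam ρ γ θ) atTop atBot := by
  unfold generator
  simp only [add_right_comm _ (diffusionPart b ρ θ _)]
  exact tendsto_atBot_add_right_of_ge' _ 0 (tendsto_driftPart_add_jumpPart_atTop ha₂ hγ hθ0)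
    (diffusionPart_eventually_nonpos hθ0 hθ1)

theorem tendsto_generator_nhdsGT_zero (ham1 : 0 < am1) (hγ : -1 < γ) (hρ : 1 ≤ ρ)
    (hθ0 : 0 < θ) (hθ1 : θ ≤ 1) :
    Tendsto (generator am1 a₀ a₁ a₂ b δ lam ρ γ θ) (𝓝[>] 0) atBot := by
  unfold generator
  simp only [add_right_comm _ (diffusionPart b ρ θ _)]
  exact tendsto_atBot_add_right_of_ge' _ _
    (tendsto_driftPart_add_jumpPart_nhdsGT_zero ham1 hγ hθ0)
    (diffusionPart_eventually_le_nhdsGT_zero hρ hθ0.le hθ1)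

theorem continuousOn_generator :
    ContinuousOn (generator am1 a₀ a₁ a₂ b δ lam ρ γ θ) (Ioi 0) := by
  unfold generator driftPart diffusionPart jumpPart
  fun_prop (disch := intros; simp_all [ne_of_gt])

end AitSahalia

open AitSahalia in
theorem ait_sahalia_generator_bound_general
    (am1 a₀ a₁ a₂ b δ lam ρ γ θ : ℝ)
    (ham1 : 0 < am1) (ha₂ : 0 < a₂)
    (hρ : 1 < ρ) (hγ : 1 < γ) (hθ0 : 0 < θ) (hθ1 : θ < 1) :
    ∃ K₁ : ℝ, 0 < K₁ ∧ ∀ y : ℝ, 0 < y →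
      θ * (y ^ (θ - 1) - y⁻¹) * (am1 * y⁻¹ - a₀ + a₁ * y - a₂ * y ^ γ)
        + (b ^ 2 * θ / 2) * ((θ - 1) * y ^ (θ + 2 * ρ - 2) + y ^ (2 * ρ - 2))
        + lam * (((1 + δ) ^ θ - 1) * y ^ θ - θ * Real.log (1 + δ)) ≤ K₁ := by
  obtain ⟨M, hM⟩ : ∃ M, ∀ y, 0 < y → generator am1 a₀ a₁ a₂ b δ lam ρ γ θ y ≤ M :=
    continuousOn_generator.exists_forall_le_of_tendsto_atBot_Ioi_zero
      (tendsto_generator_nhdsGT_zero ham1 (by linarith) hρ.le hθ0 hθ1.le)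
      (tendsto_generator_atTop ha₂ hγ hθ0 hθ1)
  exact ⟨max M 1, by positivity, fun y hy => (hM y hy).trans (le_max_left _ _)⟩

/-- Key estimate for the existence of a unique positive global solution of the generalized
Ait-Sahalia model with Poisson jumps: `LV(y) + λ(V(y+δy) - V(y))` is bounded above on
`(0, ∞)`, where `V(y) = y^θ - 1 - θ log y`, the drift is
`f(y) = a₋₁ y⁻¹ - a₀ + a₁ y - a₂ y^γ` and the diffusion coefficient is `g(y) = b y^ρ`.
Here `am1` stands for `a₋₁`. -/
theorem ait_sahalia_generator_bound
    (am1 a₀ a₁ a₂ b δ lam ρ γ θ : ℝ)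
    (ham1 : 0 < am1) (ha₀ : 0 ≤ a₀) (ha₁ : 0 ≤ a₁) (ha₂ : 0 < a₂)
    (hb : 0 ≤ b) (hδ : 0 ≤ δ) (hlam : 0 ≤ lam)
    (hρ : 1 < ρ) (hγ : 1 < γ) (hθ0 : 0 < θ) (hθ1 : θ < 1) :
    ∃ K₁ : ℝ, 0 < K₁ ∧ ∀ y : ℝ, 0 < y →
      θ * (y ^ (θ - 1) - y⁻¹) * (am1 * y⁻¹ - a₀ + a₁ * y - a₂ * y ^ γ)
        + (b ^ 2 * θ / 2) * ((θ - 1) * y ^ (θ + 2 * ρ - 2) + y ^ (2 * ρ - 2))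
        + lam * (((1 + δ) ^ θ - 1) * y ^ θ - θ * Real.log (1 + δ)) ≤ K₁ :=
  ait_sahalia_generator_bound_general am1 a₀ a₁ a₂ b δ lam ρ γ θ ham1 ha₂ hρ hγ hθ0 hθ1
end

section
/- Let p ≥ 1, a₋₁ > 0, a₀ ≥ 0, a₁ ≥ 0, a₂ ≥ 0, b ≥ 0, δ ≥ 0, λ ≥ 0, γ > 1, ρ > 1, and suppose 2ρ ≤ γ + 1 and γ ≤ p + 1. Then there exists a constant K₃ > 0 such that for all y > 0: y^{−p} − p·y^{−p−1}·(a₋₁y^{−1} − a₀ + a₁y − a₂y^{γ}) + (b²/2)·p(p+1)·y^{−p−2+2ρ} + λ·((1+δ)^{−p} − 1)·y^{−p} ≤ K₃. -/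
/-! Expanding the drift, the expression is `∑ Cᵢ y ^ eᵢ - p a₋₁ y ^ (-p - 2)` with all exponents
`eᵢ ∈ (-p - 2, 0]`; this is exactly where `2ρ ≤ γ + 1 ≤ p + 2` enters. Near `0` the negative
term `-p a₋₁ y ^ (-p - 2)` dominates every `y ^ eᵢ`, and away from `0` every `y ^ eᵢ` is bounded,
whatever the signs of the coefficients `Cᵢ`. -/

open Real Finset

lemma rpow_mul_sub_mul_le {s t C A : ℝ} (hs : 0 ≤ s) (ht : 0 ≤ t) (hC : 0 ≤ C) (hA : 0 < A) :
    t ^ s * (C - A * t) ≤ C * (C / A) ^ s := by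
  rcases le_or_gt C (A * t) with hCt | hCt
  · have : t ^ s * (C - A * t) ≤ 0 :=
      mul_nonpos_of_nonneg_of_nonpos (rpow_nonneg ht s) (by linarith)
    exact this.trans (by positivity)
  · have htC : t ≤ C / A := by rw [le_div_iff₀ hA]; linarith
    calc t ^ s * (C - A * t) ≤ (C / A) ^ s * C := by
          gcongr; all_goals linarith [mul_nonneg hA.le ht]
      _ = C * (C / A) ^ s := mul_comm _ _

-- Substituting `t = y ^ (β - e)` turns `C y^e - A y^β` into `t^s (C - A t)` with `s = e / (β - e) ≥ 0`.
lemma exists_mul_rpow_sub_mul_rpow_le {e β A : ℝ} (C : ℝ) (hβe : β < e) (he : e ≤ 0)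
    (hA : 0 < A) : ∃ K, ∀ y : ℝ, 0 < y → C * y ^ e - A * y ^ β ≤ K := by
  set C' := max C 0
  refine ⟨C' * (C' / A) ^ (e / (β - e)), fun y hy => ?_⟩
  have hpow : (y ^ (β - e)) ^ (e / (β - e)) = y ^ e := by
    rw [← rpow_mul hy.le, mul_div_cancel₀ _ (sub_ne_zero.mpr hβe.ne)]
  have hsplit : y ^ β = y ^ e * y ^ (β - e) := by
    rw [← rpow_add hy, add_sub_cancel]
  calc C * y ^ e - A * y ^ β ≤ C' * y ^ e - A * y ^ β := by
        gcongr; exact le_max_left C 0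
    _ = (y ^ (β - e)) ^ (e / (β - e)) * (C' - A * y ^ (β - e)) := by
        rw [hpow, hsplit]; ring
    _ ≤ C' * (C' / A) ^ (e / (β - e)) :=
        rpow_mul_sub_mul_le (div_nonneg_of_nonpos he (by linarith)) (rpow_nonneg hy.le _)
          (le_max_right C 0) hA

lemma exists_sum_mul_rpow_sub_mul_rpow_le {ι : Type*} (s : Finset ι) (C e : ι → ℝ) {β : ℝ}
    (hβe : ∀ i ∈ s, β < e i) (he : ∀ i ∈ s, e i ≤ 0) {A : ℝ} (hA : 0 < A) :
    ∃ K, ∀ y : ℝ, 0 < y → ∑ i ∈ s, C i * y ^ e i - A * y ^ β ≤ K := by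
  classical
  induction s using Finset.induction_on generalizing A with
  | empty => exact ⟨0, fun y hy => by simp only [sum_empty, zero_sub, neg_nonpos]; positivity⟩
  | insert j s hj ih =>
    obtain ⟨K₁, hK₁⟩ := exists_mul_rpow_sub_mul_rpow_le (C j) (hβe j (mem_insert_self j s))
      (he j (mem_insert_self j s)) (half_pos hA)
    obtain ⟨K₂, hK₂⟩ := ih (fun i hi => hβe i (mem_insert_of_mem hi))
      (fun i hi => he i (mem_insert_of_mem hi)) (half_pos hA)
    refine ⟨K₁ + K₂, fun y hy => ?_⟩
    rw [sum_insert hj]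
    linarith [hK₁ y hy, hK₂ y hy]

theorem ait_sahalia_negative_moment_drift_bound_general
    (p am1 a₀ a₁ a₂ b δ lam γ ρ : ℝ)
    (hp : 1 ≤ p)
    (ham1 : 0 < am1)
    (hρ : 1 < ρ)
    (hργ : 2 * ρ ≤ γ + 1) (hγp : γ ≤ p + 1) :
    ∃ K₃ : ℝ, 0 < K₃ ∧ ∀ y : ℝ, 0 < y →
      y ^ (-p) - p * y ^ (-p - 1) * (am1 * y⁻¹ - a₀ + a₁ * y - a₂ * y ^ γ)
        + (b ^ 2 / 2) * p * (p + 1) * y ^ (-p - 2 + 2 * ρ)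
        + lam * ((1 + δ) ^ (-p) - 1) * y ^ (-p) ≤ K₃ := by
  set C : Fin 4 → ℝ :=
    ![1 - p * a₁ + lam * ((1 + δ) ^ (-p) - 1), p * a₀, p * a₂, (b ^ 2 / 2) * p * (p + 1)]
  set e : Fin 4 → ℝ := ![-p, -p - 1, γ - p - 1, -p - 2 + 2 * ρ]
  obtain ⟨K, hK⟩ := exists_sum_mul_rpow_sub_mul_rpow_le univ C e (β := -p - 2)
    (by intro i _; fin_cases i <;> simp [e] <;> linarith)
    (by intro i _; fin_cases i <;> simp [e] <;> linarith)
    (by positivity : 0 < p * am1)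
  refine ⟨max K 1, by positivity, fun y hy => ?_⟩
  refine le_trans (le_of_eq ?_) ((hK y hy).trans (le_max_left K 1))
  have h₁ : y ^ (-p - 1) * y⁻¹ = y ^ (-p - 2) := by
    rw [← rpow_neg_one, ← rpow_add hy]; ring_nf
  have h₂ : y ^ (-p - 1) * y = y ^ (-p) := by
    rw [← rpow_add_one hy.ne']; ring_nf
  have h₃ : y ^ (-p - 1) * y ^ γ = y ^ (γ - p - 1) := by
    rw [← rpow_add hy]; ring_nf
  simp only [Fin.sum_univ_four, Fin.isValue, Matrix.cons_val_zero, Matrix.cons_val_one,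
    Matrix.cons_val, C, e]
  linear_combination (-p * am1) * h₁ - p * a₁ * h₂ + p * a₂ * h₃

/-- Key drift inequality for the boundedness of the negative moment `E[y(t)^{-p}]` of the
solution of the generalized Ait-Sahalia model with Poisson jumps
`dy = (a₋₁ y⁻¹ - a₀ + a₁ y - a₂ y^γ)dt + b y^ρ dB + δ y dN` (jump intensity `lam = λ`):
under `2ρ ≤ γ + 1` and `γ ≤ p + 1`, the Lyapunov expression below is bounded above on
`(0, ∞)`. Here `am1` stands for `a₋₁`. -/
theorem ait_sahalia_negative_moment_drift_bound
    (p am1 a₀ a₁ a₂ b δ lam γ ρ : ℝ)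
    (hp : 1 ≤ p)
    (ham1 : 0 < am1) (ha₀ : 0 ≤ a₀) (ha₁ : 0 ≤ a₁) (ha₂ : 0 ≤ a₂)
    (hb : 0 ≤ b) (hδ : 0 ≤ δ) (hlam : 0 ≤ lam)
    (hγ : 1 < γ) (hρ : 1 < ρ)
    (hργ : 2 * ρ ≤ γ + 1) (hγp : γ ≤ p + 1) :
    ∃ K₃ : ℝ, 0 < K₃ ∧ ∀ y : ℝ, 0 < y →
      y ^ (-p) - p * y ^ (-p - 1) * (am1 * y⁻¹ - a₀ + a₁ * y - a₂ * y ^ γ)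
        + (b ^ 2 / 2) * p * (p + 1) * y ^ (-p - 2 + 2 * ρ)
        + lam * ((1 + δ) ^ (-p) - 1) * y ^ (-p) ≤ K₃ :=
  ait_sahalia_negative_moment_drift_bound_general p am1 a₀ a₁ a₂ b δ lam γ ρ hp ham1 hρ hργ hγp
end

section
/- Let a₋₁ > 0, a₀ ≥ 0, a₁ ≥ 0, a₂ > 0, b ≥ 0, δ ≥ 0, λ ≥ 0, ρ > 1, γ > 1 and 0 < θ < 1. Then there exists a constant K_θ > 0 such that for all y > 0: θ(y^{θ−1} − y^{−1})·(a₋₁y^{−1} − a₀ + a₁y − a₂y^{γ}) + (b²θ/2)·(−((1−θ)/2)·y^{θ+2ρ−2} + y^{2ρ−2}) + λ·(((1+δ)^θ − 1)·y^θ − θ·log(1+δ)) ≤ K_θ. Equivalently, LV(y) + λ(V(y+δy) − V(y)) + (b²θ(1−θ)/4)·y^{θ+2ρ−2} ≤ K_θ. -/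
/-! Expanding the drift term turns the left-hand side into a finite sum of powers of `y` with
constant coefficients. Near `0` the term `-θ a₋₁ y⁻²` dominates every other negative power,
near `∞` the term `-θ a₂ y^{θ+γ-1}` dominates every other positive power of the drift and of the
jump part, and the retained half `-(b²θ(1-θ)/4) y^{θ+2ρ-2}` dominates `(b²θ/2) y^{2ρ-2}`.
Pairing every term with a share of a dominating one bounds each pair, and the remaining terms
are nonpositive. -/

open Real

theorem exists_mul_rpow_le_mul_rpow_add {a c p q : ℝ} (ha : 0 ≤ a) (hc : 0 < c) (hp : 0 ≤ p)
    (hpq : p < q) : ∃ C, ∀ y, 0 < y → a * y ^ p ≤ c * y ^ q + C := by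
  set R := (a / c) ^ (q - p)⁻¹
  have hRqp : R ^ (q - p) = a / c := rpow_inv_rpow (by positivity) (sub_pos.2 hpq).ne'
  refine ⟨a * R ^ p, fun y hy => ?_⟩
  rcases le_or_gt y R with hyR | hRy
  · have : a * y ^ p ≤ a * R ^ p := by gcongr
    linarith [mul_nonneg hc.le (rpow_nonneg hy.le q)]
  · have ha_le : a ≤ c * y ^ (q - p) := by
      calc a = c * R ^ (q - p) := by rw [hRqp]; field_simp
        _ ≤ c * y ^ (q - p) := by gcongr
    calc a * y ^ p ≤ c * y ^ (q - p) * y ^ p := by gcongr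
      _ = c * y ^ q := by rw [mul_assoc, ← rpow_add hy]; ring_nf
      _ ≤ c * y ^ q + a * R ^ p := le_add_of_nonneg_right (by positivity)

theorem exists_mul_rpow_le_mul_rpow_add_of_nonpos {a c p q : ℝ} (ha : 0 ≤ a) (hc : 0 < c)
    (hp : p ≤ 0) (hqp : q < p) : ∃ C, ∀ y, 0 < y → a * y ^ p ≤ c * y ^ q + C := by
  obtain ⟨C, hC⟩ := exists_mul_rpow_le_mul_rpow_add ha hc (neg_nonneg.2 hp) (neg_lt_neg hqp)
  refine ⟨C, fun y hy => ?_⟩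
  simpa only [rpow_neg_eq_inv_rpow, inv_inv] using hC y⁻¹ (inv_pos.2 hy)

theorem ait_sahalia_lyapunov_drift_eq {θ am1 a₀ a₁ a₂ γ y : ℝ} (hy : 0 < y) :
    θ * (y ^ (θ - 1) - y⁻¹) * (am1 * y⁻¹ - a₀ + a₁ * y - a₂ * y ^ γ)
      = θ * am1 * y ^ (θ - 2) - θ * am1 * y ^ (-2 : ℝ) + θ * a₀ * y ^ (-1 : ℝ)
        - θ * a₀ * y ^ (θ - 1) + θ * a₁ * y ^ θ - θ * a₁ + θ * a₂ * y ^ (γ - 1)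
        - θ * a₂ * y ^ (θ + γ - 1) := by
  have e₁ : y ^ (θ - 1) * y⁻¹ = y ^ (θ - 2) := by rw [← rpow_neg_one, ← rpow_add hy]; ring_nf
  have e₂ : y ^ (θ - 1) * y = y ^ θ := by rw [← rpow_add_one hy.ne']; ring_nf
  have e₃ : y ^ (θ - 1) * y ^ γ = y ^ (θ + γ - 1) := by rw [← rpow_add hy]; ring_nf
  have e₄ : y⁻¹ * y⁻¹ = y ^ (-2 : ℝ) := by rw [← rpow_neg_one, ← rpow_add hy]; norm_num
  have e₅ : y⁻¹ * y ^ γ = y ^ (γ - 1) := by rw [← rpow_neg_one, ← rpow_add hy]; ring_nf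
  rw [rpow_neg_one]
  linear_combination (θ * am1) * e₁ + (θ * a₁) * e₂ - (θ * a₂) * e₃ - (θ * am1) * e₄
    - (θ * a₁) * inv_mul_cancel₀ hy.ne' + (θ * a₂) * e₅

theorem ait_sahalia_time_average_drift_bound_general
    (am1 a₀ a₁ a₂ b δ lam ρ γ θ : ℝ)
    (ham1 : 0 < am1) (ha₀ : 0 ≤ a₀) (ha₁ : 0 ≤ a₁) (ha₂ : 0 < a₂)
    (hδ : 0 ≤ δ) (hlam : 0 ≤ lam)
    (hρ : 1 < ρ) (hγ : 1 < γ) (hθ0 : 0 < θ) (hθ1 : θ < 1) :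
    ∃ Kθ : ℝ, 0 < Kθ ∧ ∀ y : ℝ, 0 < y →
      θ * (y ^ (θ - 1) - y⁻¹) * (am1 * y⁻¹ - a₀ + a₁ * y - a₂ * y ^ γ)
        + (b ^ 2 * θ / 2) * (-((1 - θ) / 2) * y ^ (θ + 2 * ρ - 2) + y ^ (2 * ρ - 2))
        + lam * (((1 + δ) ^ θ - 1) * y ^ θ - θ * Real.log (1 + δ)) ≤ Kθ := by
  have hjump : 0 ≤ lam * ((1 + δ) ^ θ - 1) :=
    mul_nonneg hlam (sub_nonneg.2 (one_le_rpow (by linarith) hθ0.le))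
  have hlog : 0 ≤ lam * (θ * log (1 + δ)) := by
    have := log_nonneg (by linarith : (1 : ℝ) ≤ 1 + δ); positivity
  obtain ⟨C₁, h₁⟩ := exists_mul_rpow_le_mul_rpow_add_of_nonpos (p := θ - 2) (q := -2)
    (by positivity : 0 ≤ θ * am1) (by positivity : 0 < θ * am1 / 2) (by linarith) (by linarith)
  obtain ⟨C₂, h₂⟩ := exists_mul_rpow_le_mul_rpow_add_of_nonpos (p := -1) (q := -2)
    (by positivity : 0 ≤ θ * a₀) (by positivity : 0 < θ * am1 / 2) (by norm_num) (by norm_num)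
  obtain ⟨C₃, h₃⟩ := exists_mul_rpow_le_mul_rpow_add (p := θ) (q := θ + γ - 1)
    (add_nonneg (by positivity : 0 ≤ θ * a₁) hjump) (by positivity : 0 < θ * a₂ / 2)
    hθ0.le (by linarith)
  obtain ⟨C₄, h₄⟩ := exists_mul_rpow_le_mul_rpow_add (p := γ - 1) (q := θ + γ - 1)
    (by positivity : 0 ≤ θ * a₂) (by positivity : 0 < θ * a₂ / 2) (by linarith) (by linarith)
  obtain ⟨C₅, h₅⟩ := exists_mul_rpow_le_mul_rpow_add (p := 2 * ρ - 2) (q := θ + 2 * ρ - 2)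
    zero_le_one (by linarith : 0 < (1 - θ) / 2) (by linarith) (by linarith)
  refine ⟨max (C₁ + C₂ + C₃ + C₄ + b ^ 2 * θ / 2 * C₅) 1, by positivity, fun y hy => ?_⟩
  have hdiff := mul_le_mul_of_nonneg_left (h₅ y hy) (by positivity : 0 ≤ b ^ 2 * θ / 2)
  have hdrop : 0 ≤ θ * a₀ * y ^ (θ - 1) + θ * a₁ := by positivity
  rw [ait_sahalia_lyapunov_drift_eq hy]
  refine le_max_of_le_left ?_
  linarith [h₁ y hy, h₂ y hy, h₃ y hy, h₄ y hy]

/-- Key estimate for the asymptotic boundedness of `(1/t)∫₀ᵗ E[y(s)^{θ+2ρ-2}]ds` for the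
generalized Ait-Sahalia model with Poisson jumps: retaining only half of the negative term
`-(b²θ(1-θ)/2) y^{θ+2ρ-2}` of `LV`, the expression `LV(y) + λ(V(y+δy) - V(y))
+ (b²θ(1-θ)/4) y^{θ+2ρ-2}` is bounded above on `(0, ∞)`, where
`V(y) = y^θ - 1 - θ log y`. Here `am1` stands for `a₋₁` and `lam` for `λ`. -/
theorem ait_sahalia_time_average_drift_bound
    (am1 a₀ a₁ a₂ b δ lam ρ γ θ : ℝ)
    (ham1 : 0 < am1) (ha₀ : 0 ≤ a₀) (ha₁ : 0 ≤ a₁) (ha₂ : 0 < a₂)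
    (hb : 0 ≤ b) (hδ : 0 ≤ δ) (hlam : 0 ≤ lam)
    (hρ : 1 < ρ) (hγ : 1 < γ) (hθ0 : 0 < θ) (hθ1 : θ < 1) :
    ∃ Kθ : ℝ, 0 < Kθ ∧ ∀ y : ℝ, 0 < y →
      θ * (y ^ (θ - 1) - y⁻¹) * (am1 * y⁻¹ - a₀ + a₁ * y - a₂ * y ^ γ)
        + (b ^ 2 * θ / 2) * (-((1 - θ) / 2) * y ^ (θ + 2 * ρ - 2) + y ^ (2 * ρ - 2))
        + lam * (((1 + δ) ^ θ - 1) * y ^ θ - θ * Real.log (1 + δ)) ≤ Kθ :=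
  ait_sahalia_time_average_drift_bound_general am1 a₀ a₁ a₂ b δ lam ρ γ θ ham1 ha₀ ha₁ ha₂ hδ hlam
    hρ hγ hθ0 hθ1
end

section
/- Let a₋₁ > 0, a₀ ≥ 0, a₁ ≥ 0, a₂ ≥ 0, b > 0, δ ≥ 0, λ ≥ 0, γ > 1, ρ > 3/2, and let θ ∈ (1/2, 1) be such that θ + 2ρ − 2 > 2. Then there exists a constant K₄ > 0 such that for all y > 0: (a₋₁/4)·(y^{−2} + y²) + LV(y) + λ·(V(y + δy) − V(y)) ≤ K₄. -/
private lemma rpow_le_linear_aux (s ε : ℝ) (hs0 : 0 ≤ s) (hs1 : s < 1) (hε : 0 < ε) :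
    ∃ C : ℝ, 0 < C ∧ ∀ X : ℝ, 0 ≤ X → X ^ s ≤ ε * X + C := by
  set T := ε ^ (-1 / (1 - s)) with hT
  have hTpos : 0 < T := Real.rpow_pos_of_pos hε _
  refine ⟨T ^ s + 1, by positivity, fun X hX => ?_⟩
  rcases le_total X T with h | h
  · have h1 : X ^ s ≤ T ^ s := Real.rpow_le_rpow hX h hs0
    nlinarith [mul_nonneg hε.le hX]
  · have hXpos : 0 < X := lt_of_lt_of_le hTpos h
    have h1 : X ^ s = X * X ^ (s - 1) := by
      have h0 := Real.rpow_add hXpos 1 (s - 1)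
      rw [Real.rpow_one, show (1:ℝ) + (s - 1) = s by ring] at h0
      exact h0
    have h3 : T ^ (s - 1) = ε := by
      rw [hT, ← Real.rpow_mul hε.le]
      have hs1' : (1:ℝ) - s ≠ 0 := sub_ne_zero_of_ne (ne_of_gt (by linarith))
      rw [show (-1 / (1 - s)) * (s - 1) = 1 by field_simp; ring, Real.rpow_one]
    have h2 : X ^ (s - 1) ≤ T ^ (s - 1) := by
      rw [show s - 1 = -(1 - s) by ring, Real.rpow_neg hXpos.le, Real.rpow_neg hTpos.le]
      have hTX : T ^ (1 - s) ≤ X ^ (1 - s) :=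
        Real.rpow_le_rpow hTpos.le h (by linarith)
      exact inv_anti₀ (Real.rpow_pos_of_pos hTpos _) hTX
    have h4 : X ^ s ≤ X * ε := by
      rw [h1]
      exact mul_le_mul_of_nonneg_left (h2.trans_eq h3) hX
    nlinarith [Real.rpow_nonneg hTpos.le s]

private lemma absorb_aux (A c s : ℝ) (hA : 0 ≤ A) (hc : 0 < c)
    (hs0 : 0 ≤ s) (hs1 : s < 1) :
    ∃ C : ℝ, 0 < C ∧ ∀ X : ℝ, 0 ≤ X → A * X ^ s ≤ c * X + C := by
  obtain ⟨C, hCpos, hC⟩ := rpow_le_linear_aux s (c / (A + 1)) hs0 hs1 (by positivity)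
  refine ⟨A * C + 1, by positivity, fun X hX => ?_⟩
  have h1 := mul_le_mul_of_nonneg_left (hC X hX) hA
  have h2 : A * (c / (A + 1)) ≤ c := by
    rw [mul_div_assoc', div_le_iff₀ (by linarith)]
    nlinarith
  have h3 : A * (c / (A + 1)) * X ≤ c * X := mul_le_mul_of_nonneg_right h2 hX
  nlinarith

set_option maxHeartbeats 1600000 in
/-- Key estimate for the asymptotic boundedness of `(1/t)∫₀ᵗ E[y(s)^{-2} + y(s)²]ds` when
`ρ > 3/2` for the generalized Ait-Sahalia model with Poisson jumps: for `θ ∈ (1/2, 1)` with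
`θ + 2ρ - 2 > 2` one has `(a₋₁/4)(y^{-2} + y²) + LV(y) + λ(V(y+δy) - V(y)) ≤ K₄` on
`(0, ∞)`, where `V(y) = y^θ - 1 - θ log y`,
`LV(y) = V'(y)f(y) + (1/2)V''(y)g(y)²` with `f(y) = a₋₁ y⁻¹ - a₀ + a₁ y - a₂ y^γ`,
`g(y) = b y^ρ`, `V'(y) = θ(y^{θ-1} - y⁻¹)`, `V''(y) = θ((θ-1)y^{θ-2} + y^{-2})`.
Here `am1` stands for `a₋₁` and `lam` for `λ`. -/
theorem ait_sahalia_inverse_square_drift_bound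
    (am1 a₀ a₁ a₂ b δ lam γ ρ θ : ℝ)
    (ham1 : 0 < am1) (ha₀ : 0 ≤ a₀) (ha₁ : 0 ≤ a₁) (ha₂ : 0 ≤ a₂)
    (hb : 0 < b) (hδ : 0 ≤ δ) (hlam : 0 ≤ lam)
    (hγ : 1 < γ) (hρ : 3 / 2 < ρ)
    (hθhalf : 1 / 2 < θ) (hθ1 : θ < 1) (hθρ : 2 < θ + 2 * ρ - 2) :
    ∃ K₄ : ℝ, 0 < K₄ ∧ ∀ y : ℝ, 0 < y →
      (am1 / 4) * (y ^ (-2 : ℝ) + y ^ 2)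
        + θ * (y ^ (θ - 1) - y⁻¹) * (am1 * y⁻¹ - a₀ + a₁ * y - a₂ * y ^ γ)
        + (1 / 2) * (θ * ((θ - 1) * y ^ (θ - 2) + y ^ (-2 : ℝ))) * (b * y ^ ρ) ^ 2
        + lam * ((((1 + δ) * y) ^ θ - 1 - θ * Real.log ((1 + δ) * y))
            - (y ^ θ - 1 - θ * Real.log y)) ≤ K₄ := by
  have hθpos : 0 < θ := by linarith
  have hEpos : 0 < θ + 2 * ρ - 2 := by linarith
  have hδ1 : (0:ℝ) < 1 + δ := by linarith
  have hpow1 : (1:ℝ) ≤ (1 + δ) ^ θ := Real.one_le_rpow (by linarith) hθpos.le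
  have hc₀ : 0 < am1 * (θ - 1/4) / 2 := by nlinarith
  have hc₇ : 0 < θ * (1 - θ) * b ^ 2 / 2 / 3 := by
    have := mul_pos (mul_pos hθpos (show (0:ℝ) < 1 - θ by linarith)) (pow_pos hb 2)
    linarith
  -- absorb constants
  obtain ⟨C₂, hC₂, hB₂⟩ := absorb_aux (θ * am1) (am1 * (θ - 1/4) / 2) ((2 - θ) / 2)
    (by nlinarith) hc₀ (by linarith) (by linarith)
  obtain ⟨C₄, hC₄, hB₄⟩ := absorb_aux (θ * a₀) (am1 * (θ - 1/4) / 2) (1/2)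
    (by nlinarith) hc₀ (by norm_num) (by norm_num)
  obtain ⟨C₁, hC₁, hB₁⟩ := absorb_aux (am1 / 4) (θ * (1 - θ) * b ^ 2 / 2 / 3)
    (2 / (θ + 2 * ρ - 2)) (by linarith) hc₇
    (le_of_lt (div_pos two_pos hEpos)) ((div_lt_one hEpos).mpr (by linarith))
  obtain ⟨Cθ, hCθ, hBθ⟩ := absorb_aux (θ * a₁ + lam * ((1 + δ) ^ θ - 1))
    (θ * (1 - θ) * b ^ 2 / 2 / 3) (θ / (θ + 2 * ρ - 2))
    (by nlinarith) hc₇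
    (le_of_lt (div_pos hθpos hEpos)) ((div_lt_one hEpos).mpr (by linarith))
  obtain ⟨C₈, hC₈, hB₈⟩ := absorb_aux (θ * b ^ 2 / 2) (θ * (1 - θ) * b ^ 2 / 2 / 3)
    ((2 * ρ - 2) / (θ + 2 * ρ - 2))
    (by positivity) hc₇
    (le_of_lt (div_pos (by linarith) hEpos)) ((div_lt_one hEpos).mpr (by linarith))
  refine ⟨C₂ + C₄ + C₁ + Cθ + C₈ + θ * a₂ + 1, by nlinarith, fun y hy => ?_⟩
  have hyne : y ≠ 0 := hy.ne'
  have hy2 : y ^ (2:ℝ) = y * y := by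
    rw [show (2:ℝ) = 1 + 1 by norm_num, Real.rpow_add hy, Real.rpow_one]
  have hj8 : y ^ (2 * ρ) = (y ^ ρ) ^ 2 := by
    rw [mul_comm, Real.rpow_mul hy.le, Real.rpow_two]
  have jm2 : y ^ (-2:ℝ) = 1 / (y * y) := by
    rw [show (-2:ℝ) = -(2:ℝ) by norm_num, Real.rpow_neg hy.le, hy2, one_div]
  have j1 : y ^ (θ - 1) = y ^ θ / y := by rw [Real.rpow_sub hy, Real.rpow_one]
  have j2 : y ^ (θ - 2) = y ^ θ / (y * y) := by rw [Real.rpow_sub hy, hy2]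
  have j3 : y ^ (θ + γ - 1) = y ^ θ * y ^ γ / y := by
    rw [Real.rpow_sub hy, Real.rpow_add hy, Real.rpow_one]
  have j4 : y ^ (γ - 1) = y ^ γ / y := by rw [Real.rpow_sub hy, Real.rpow_one]
  have j5 : y ^ (θ + 2 * ρ - 2) = y ^ θ * (y ^ ρ) ^ 2 / (y * y) := by
    rw [Real.rpow_sub hy, Real.rpow_add hy, hj8, hy2]
  have j6 : y ^ (2 * ρ - 2) = (y ^ ρ) ^ 2 / (y * y) := by
    rw [Real.rpow_sub hy, hj8, hy2]
  have key : (am1 / 4) * (y ^ (-2 : ℝ) + y ^ 2)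
        + θ * (y ^ (θ - 1) - y⁻¹) * (am1 * y⁻¹ - a₀ + a₁ * y - a₂ * y ^ γ)
        + (1 / 2) * (θ * ((θ - 1) * y ^ (θ - 2) + y ^ (-2 : ℝ))) * (b * y ^ ρ) ^ 2
        + lam * ((((1 + δ) * y) ^ θ - 1 - θ * Real.log ((1 + δ) * y))
            - (y ^ θ - 1 - θ * Real.log y))
      = (am1 / 4) * y ^ (-2:ℝ) + (am1 / 4) * y ^ 2
        + θ * am1 * y ^ (θ - 2) - θ * a₀ * y ^ (θ - 1) + θ * a₁ * y ^ θ
        - θ * a₂ * y ^ (θ + γ - 1)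
        - θ * am1 * y ^ (-2:ℝ) + θ * a₀ * y⁻¹ - θ * a₁ + θ * a₂ * y ^ (γ - 1)
        - (θ * (1 - θ) * b ^ 2 / 2) * y ^ (θ + 2 * ρ - 2)
        + (θ * b ^ 2 / 2) * y ^ (2 * ρ - 2)
        + lam * ((1 + δ) ^ θ - 1) * y ^ θ - lam * θ * Real.log (1 + δ) := by
    rw [Real.mul_rpow hδ1.le hy.le, Real.log_mul (ne_of_gt hδ1) hyne,
      jm2, j1, j2, j3, j4, j5, j6]
    field_simp
    ring
  -- instantiate the absorption bounds at the right powers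
  have kB₂ : θ * am1 * y ^ (θ - 2) ≤ (am1 * (θ - 1/4) / 2) * y ^ (-2:ℝ) + C₂ := by
    have h := hB₂ (y ^ (-2:ℝ)) (Real.rpow_nonneg hy.le _)
    rwa [show ((y:ℝ) ^ (-2:ℝ)) ^ ((2 - θ) / 2) = y ^ (θ - 2) by
      rw [← Real.rpow_mul hy.le]; congr 1; ring] at h
  have kB₄ : θ * a₀ * y⁻¹ ≤ (am1 * (θ - 1/4) / 2) * y ^ (-2:ℝ) + C₄ := by
    have h := hB₄ (y ^ (-2:ℝ)) (Real.rpow_nonneg hy.le _)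
    rwa [show ((y:ℝ) ^ (-2:ℝ)) ^ ((1:ℝ)/2) = y⁻¹ by
      rw [← Real.rpow_mul hy.le, show (-2:ℝ) * (1/2) = -1 by norm_num,
        Real.rpow_neg_one]] at h
  have hEne : θ + 2 * ρ - 2 ≠ 0 := ne_of_gt hEpos
  have kB₁ : (am1 / 4) * (y * y) ≤
      (θ * (1 - θ) * b ^ 2 / 2 / 3) * y ^ (θ + 2 * ρ - 2) + C₁ := by
    have h := hB₁ (y ^ (θ + 2 * ρ - 2)) (Real.rpow_nonneg hy.le _)
    rwa [show ((y:ℝ) ^ (θ + 2 * ρ - 2)) ^ (2 / (θ + 2 * ρ - 2)) = y * y by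
      rw [← Real.rpow_mul hy.le, show (θ + 2 * ρ - 2) * (2 / (θ + 2 * ρ - 2)) = 2 by
        field_simp, hy2]] at h
  have kBθ : (θ * a₁ + lam * ((1 + δ) ^ θ - 1)) * y ^ θ ≤
      (θ * (1 - θ) * b ^ 2 / 2 / 3) * y ^ (θ + 2 * ρ - 2) + Cθ := by
    have h := hBθ (y ^ (θ + 2 * ρ - 2)) (Real.rpow_nonneg hy.le _)
    rwa [show ((y:ℝ) ^ (θ + 2 * ρ - 2)) ^ (θ / (θ + 2 * ρ - 2)) = y ^ θ by
      rw [← Real.rpow_mul hy.le]; congr 1; field_simp] at h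
  have kB₈ : (θ * b ^ 2 / 2) * y ^ (2 * ρ - 2) ≤
      (θ * (1 - θ) * b ^ 2 / 2 / 3) * y ^ (θ + 2 * ρ - 2) + C₈ := by
    have h := hB₈ (y ^ (θ + 2 * ρ - 2)) (Real.rpow_nonneg hy.le _)
    rwa [show ((y:ℝ) ^ (θ + 2 * ρ - 2)) ^ ((2 * ρ - 2) / (θ + 2 * ρ - 2))
        = y ^ (2 * ρ - 2) by
      rw [← Real.rpow_mul hy.le]; congr 1; field_simp] at h
  have kB₆ : y ^ (γ - 1) - y ^ (θ + γ - 1) ≤ 1 := by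
    rcases le_total y 1 with h | h
    · have h1 : y ^ (γ - 1) ≤ 1 := Real.rpow_le_one hy.le h (by linarith)
      have h2 : 0 ≤ y ^ (θ + γ - 1) := Real.rpow_nonneg hy.le _
      linarith
    · have h1 : y ^ (γ - 1) ≤ y ^ (θ + γ - 1) :=
        Real.rpow_le_rpow_of_exponent_le h (by linarith)
      linarith
  have kB₆' : θ * a₂ * (y ^ (γ - 1) - y ^ (θ + γ - 1)) ≤ θ * a₂ * 1 :=
    mul_le_mul_of_nonneg_left kB₆ (mul_nonneg hθpos.le ha₂)
  have nn1 : 0 ≤ θ * a₀ * y ^ (θ - 1) :=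
    mul_nonneg (mul_nonneg hθpos.le ha₀) (Real.rpow_nonneg hy.le _)
  have nn2 : 0 ≤ θ * a₁ := mul_nonneg hθpos.le ha₁
  have nn3 : 0 ≤ lam * θ * Real.log (1 + δ) :=
    mul_nonneg (mul_nonneg hlam hθpos.le) (Real.log_nonneg (by linarith))
  rw [key]
  linarith [kB₂, kB₄, kB₁, kBθ, kB₈, kB₆', nn1, nn2, nn3]
end

section
/- Let a₋₁ > 0, a₀ ≥ 0, a₁ ≥ 0, a₂ > 0, b ≥ 0, δ ≥ 0, λ ≥ 0, ρ > 1, γ > 1 and 0 < θ < 1. Then there exists a constant K₅ > 0 such that for all y > 0: V(y) + LV(y) + λ·(V(y + δy) − V(y)) ≤ K₅. -/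
/-!
After expanding `V + LV` and the jump term, every power of `y` with a positive coefficient is
dominated by one with a negative coefficient and of strictly higher order at the same end of
`(0, ∞)`: near `0` the term `-θ a₋₁ y⁻²` absorbs `y^{θ-2}` and `y⁻¹`, near `∞` the terms
`-θ a₂ y^{θ+γ-1}` and `-θ(1-θ) b² y^{θ+2ρ-2}/2` absorb `y^θ`, `y^{γ-1}` and `y^{2ρ-2}`. The logarithm is controlled by `log y ≥ 1 - y⁻¹`.
-/

lemma exists_mul_rpow_sub_mul_rpow_le_of_nonneg {c d p q : ℝ} (hc : 0 ≤ c) (hd : 0 < d)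
    (hp : 0 ≤ p) (hpq : p < q) :
    ∃ K, ∀ y : ℝ, 0 < y → c * y ^ p - d * y ^ q ≤ K := by
  have hqp : 0 < q - p := sub_pos.2 hpq
  refine ⟨c * ((c / d) ^ (q - p)⁻¹) ^ p, fun y hy => ?_⟩
  have hsplit : y ^ q = y ^ p * y ^ (q - p) := by rw [← Real.rpow_add hy, add_sub_cancel]
  rcases le_or_gt (c / d) (y ^ (q - p)) with hlarge | hsmall
  · have hc_le : c ≤ d * y ^ (q - p) := by rwa [div_le_iff₀' hd] at hlarge
    calc c * y ^ p - d * y ^ q = y ^ p * (c - d * y ^ (q - p)) := by rw [hsplit]; ring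
      _ ≤ 0 := mul_nonpos_of_nonneg_of_nonpos (by positivity) (by linarith)
      _ ≤ _ := by positivity
  · have hy_le : y ≤ (c / d) ^ (q - p)⁻¹ := by
      have := Real.rpow_le_rpow (by positivity) hsmall.le (inv_nonneg.2 hqp.le)
      rwa [← Real.rpow_mul hy.le, mul_inv_cancel₀ hqp.ne', Real.rpow_one] at this
    calc c * y ^ p - d * y ^ q ≤ c * y ^ p := by
          have := Real.rpow_pos_of_pos hy q
          nlinarith
      _ ≤ _ := by gcongr

lemma exists_mul_rpow_sub_mul_rpow_le_of_nonpos {c d p q : ℝ} (hc : 0 ≤ c) (hd : 0 < d)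
    (hp : p ≤ 0) (hqp : q < p) :
    ∃ K, ∀ y : ℝ, 0 < y → c * y ^ p - d * y ^ q ≤ K := by
  obtain ⟨K, hK⟩ :=
    exists_mul_rpow_sub_mul_rpow_le_of_nonneg hc hd (neg_nonneg.2 hp) (neg_lt_neg hqp)
  refine ⟨K, fun y hy => ?_⟩
  simpa [Real.inv_rpow hy.le, Real.rpow_neg hy.le] using hK y⁻¹ (inv_pos.2 hy)

lemma ait_sahalia_lyapunov_eq {am1 a₀ a₁ a₂ b δ lam ρ γ θ y : ℝ} (hδ : 0 ≤ δ) (hy : 0 < y) :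
    (y ^ θ - 1 - θ * Real.log y)
        + (θ * (y ^ (θ - 1) - y⁻¹) * (am1 * y⁻¹ - a₀ + a₁ * y - a₂ * y ^ γ)
            + (1 / 2) * (θ * ((θ - 1) * y ^ (θ - 2) + y ^ (-2 : ℝ))) * (b * y ^ ρ) ^ 2)
        + lam * ((((1 + δ) * y) ^ θ - 1 - θ * Real.log ((1 + δ) * y))
            - (y ^ θ - 1 - θ * Real.log y))
      = (θ * am1 * y ^ (θ - 2) - θ * am1 / 2 * y ^ (-2 : ℝ))
        + (θ * (a₀ + 1) * y ^ (-1 : ℝ) - θ * am1 / 2 * y ^ (-2 : ℝ))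
        + ((1 + θ * a₁ + lam * ((1 + δ) ^ θ - 1)) * y ^ θ - θ * a₂ / 2 * y ^ (θ + γ - 1))
        + (θ * a₂ * y ^ (γ - 1) - θ * a₂ / 2 * y ^ (θ + γ - 1))
        + θ * b ^ 2 / 2 * (y ^ ((ρ - 1) * 2) - (1 - θ) * y ^ (θ + (ρ - 1) * 2))
        - θ * (y⁻¹ + Real.log y) - θ * a₀ * y ^ (θ - 1) - θ * a₁ - 1
        - lam * θ * Real.log (1 + δ) := by
  have hsq : y ^ ((ρ - 1) * 2) = (y ^ ρ / y) ^ 2 := by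
    rw [Real.rpow_mul hy.le, Real.rpow_two, Real.rpow_sub_one hy.ne']
  simp only [Real.rpow_add hy, hsq, Real.rpow_sub hy, Real.rpow_one, Real.rpow_neg hy.le,
    Real.rpow_two, Real.mul_rpow (by linarith : (0 : ℝ) ≤ 1 + δ) hy.le,
    Real.log_mul (by linarith : (1 : ℝ) + δ ≠ 0) hy.ne']
  field_simp
  ring

theorem ait_sahalia_stochastic_boundedness_drift_bound_general
    (am1 a₀ a₁ a₂ b δ lam ρ γ θ : ℝ)
    (ham1 : 0 < am1) (ha₀ : 0 ≤ a₀) (ha₁ : 0 ≤ a₁) (ha₂ : 0 < a₂)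
    (hδ : 0 ≤ δ) (hlam : 0 ≤ lam)
    (hρ : 1 < ρ) (hγ : 1 < γ) (hθ0 : 0 < θ) (hθ1 : θ < 1) :
    ∃ K₅ : ℝ, 0 < K₅ ∧ ∀ y : ℝ, 0 < y →
      (y ^ θ - 1 - θ * Real.log y)
        + (θ * (y ^ (θ - 1) - y⁻¹) * (am1 * y⁻¹ - a₀ + a₁ * y - a₂ * y ^ γ)
            + (1 / 2) * (θ * ((θ - 1) * y ^ (θ - 2) + y ^ (-2 : ℝ))) * (b * y ^ ρ) ^ 2)
        + lam * ((((1 + δ) * y) ^ θ - 1 - θ * Real.log ((1 + δ) * y))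
            - (y ^ θ - 1 - θ * Real.log y)) ≤ K₅ := by
  have hC : 0 ≤ 1 + θ * a₁ + lam * ((1 + δ) ^ θ - 1) := by
    have := Real.one_le_rpow (by linarith : (1 : ℝ) ≤ 1 + δ) hθ0.le
    positivity
  obtain ⟨K₁, h₁⟩ := exists_mul_rpow_sub_mul_rpow_le_of_nonpos (c := θ * am1)
    (d := θ * am1 / 2) (p := θ - 2) (q := -2) (by positivity) (by positivity) (by linarith)
    (by linarith)
  obtain ⟨K₂, h₂⟩ := exists_mul_rpow_sub_mul_rpow_le_of_nonpos (c := θ * (a₀ + 1))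
    (d := θ * am1 / 2) (p := -1) (q := -2) (by positivity) (by positivity) (by norm_num)
    (by norm_num)
  obtain ⟨K₃, h₃⟩ := exists_mul_rpow_sub_mul_rpow_le_of_nonneg hC
    (d := θ * a₂ / 2) (by positivity) hθ0.le (by linarith : θ < θ + γ - 1)
  obtain ⟨K₄, h₄⟩ := exists_mul_rpow_sub_mul_rpow_le_of_nonneg (c := θ * a₂)
    (d := θ * a₂ / 2) (by positivity) (by positivity) (by linarith)
    (by linarith : γ - 1 < θ + γ - 1)
  obtain ⟨Kσ, hσ⟩ := exists_mul_rpow_sub_mul_rpow_le_of_nonneg (c := 1) (d := 1 - θ)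
    zero_le_one (by linarith) (by linarith) (by linarith : (ρ - 1) * 2 < θ + (ρ - 1) * 2)
  refine ⟨max (K₁ + K₂ + K₃ + K₄ + θ * b ^ 2 / 2 * Kσ) 1, by positivity, fun y hy => ?_⟩
  have hlog : θ * 1 ≤ θ * (y⁻¹ + Real.log y) := by
    gcongr
    linarith [Real.one_sub_inv_le_log_of_pos hy]
  have hdiffusion := mul_le_mul_of_nonneg_left (hσ y hy) (by positivity : 0 ≤ θ * b ^ 2 / 2)
  have ha₀_term : 0 ≤ θ * a₀ * y ^ (θ - 1) := by positivity
  have hjump_log : 0 ≤ lam * θ * Real.log (1 + δ) := by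
    have := Real.log_nonneg (by linarith : (1 : ℝ) ≤ 1 + δ)
    positivity
  rw [ait_sahalia_lyapunov_eq hδ hy]
  refine le_max_of_le_left ?_
  linarith [h₁ y hy, h₂ y hy, h₃ y hy, h₄ y hy, mul_nonneg hθ0.le ha₁]

/-- Key estimate in the proof of stochastic boundedness of the generalized Ait-Sahalia model
with Poisson jumps: `V(y) + LV(y) + λ(V(y+δy) - V(y))` is bounded above on `(0, ∞)`, where
`V(y) = y^θ - 1 - θ log y`, `LV(y) = V'(y)f(y) + (1/2)V''(y)g(y)²` with
`f(y) = a₋₁ y⁻¹ - a₀ + a₁ y - a₂ y^γ`, `g(y) = b y^ρ`, `V'(y) = θ(y^{θ-1} - y⁻¹)` and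
`V''(y) = θ((θ-1)y^{θ-2} + y^{-2})`. Here `am1` stands for `a₋₁` and `lam` for `λ`. -/
theorem ait_sahalia_stochastic_boundedness_drift_bound
    (am1 a₀ a₁ a₂ b δ lam ρ γ θ : ℝ)
    (ham1 : 0 < am1) (ha₀ : 0 ≤ a₀) (ha₁ : 0 ≤ a₁) (ha₂ : 0 < a₂)
    (hb : 0 ≤ b) (hδ : 0 ≤ δ) (hlam : 0 ≤ lam)
    (hρ : 1 < ρ) (hγ : 1 < γ) (hθ0 : 0 < θ) (hθ1 : θ < 1) :
    ∃ K₅ : ℝ, 0 < K₅ ∧ ∀ y : ℝ, 0 < y →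
      (y ^ θ - 1 - θ * Real.log y)
        + (θ * (y ^ (θ - 1) - y⁻¹) * (am1 * y⁻¹ - a₀ + a₁ * y - a₂ * y ^ γ)
            + (1 / 2) * (θ * ((θ - 1) * y ^ (θ - 2) + y ^ (-2 : ℝ))) * (b * y ^ ρ) ^ 2)
        + lam * ((((1 + δ) * y) ^ θ - 1 - θ * Real.log ((1 + δ) * y))
            - (y ^ θ - 1 - θ * Real.log y)) ≤ K₅ :=
  ait_sahalia_stochastic_boundedness_drift_bound_general am1 a₀ a₁ a₂ b δ lam ρ γ θ ham1 ha₀ ha₁ ha₂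
    hδ hlam hρ hγ hθ0 hθ1
end
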